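/- In the group G presented by ⟨g_0,…,g_5, A | g_i³ = 1 (0≤i≤5), (Ag_0⁻¹)³ = (Ag_1⁻¹)³ = (Ag_3⁻¹)³ = (Ag_4⁻¹)³ = (Ag_5⁻¹)³ = (Ag_2)³ = 1, A g_0⁻¹g_1g_0g_1⁻¹ = A g_5⁻¹g_0g_5g_0⁻¹ = A g_4⁻¹g_5g_4g_5⁻¹ = A g_3⁻¹g_4g_3g_4⁻¹ = A g_3⁻¹g_2⁻¹g_3g_2 = A g_2g_1g_2⁻¹g_1⁻¹ = 1⟩, adding the relation A = 1 yields a group isomorphic to G_{6,3} = ⟨a_0,…,a_5 | a_i³ = 1, a_i a_{i+1} = a_{i+1} a_i (i ∈ ℤ/6ℤ)⟩. -/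

import Mathlib

open FreeGroup

/-- Generators: `some i` is `g_i` for `i : Fin 6`, `none` is `A`. -/
abbrev Gen := Option (Fin 6)

def g (i : Fin 6) : FreeGroup Gen := of (some i)
def A : FreeGroup Gen := of none

/-- The relations of `π₁(𝒪)` from the side pairings of the Dirichlet domain. -/
def orbRels : Set (FreeGroup Gen) :=
  (Set.range fun i : Fin 6 => (g i) ^ 3) ∪
  { (A * (g 0)⁻¹) ^ 3, (A * (g 1)⁻¹) ^ 3, (A * (g 3)⁻¹) ^ 3,
    (A * (g 4)⁻¹) ^ 3, (A * (g 5)⁻¹) ^ 3, (A * g 2) ^ 3,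
    A * (g 0)⁻¹ * g 1 * g 0 * (g 1)⁻¹,
    A * (g 5)⁻¹ * g 0 * g 5 * (g 0)⁻¹,
    A * (g 4)⁻¹ * g 5 * g 4 * (g 5)⁻¹,
    A * (g 3)⁻¹ * g 4 * g 3 * (g 4)⁻¹,
    A * (g 3)⁻¹ * (g 2)⁻¹ * g 3 * g 2,
    A * g 2 * g 1 * (g 2)⁻¹ * (g 1)⁻¹ }

/-- The relations of the polygon group `G_{6,3}` on generators `a_i`, `i ∈ ℤ/6ℤ`. -/
def polygonRels : Set (FreeGroup (ZMod 6)) :=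
  (Set.range fun i : ZMod 6 => (of i) ^ 3) ∪
    (Set.range fun i : ZMod 6 =>
      of i * of (i + 1) * (of (i + 1) * of i)⁻¹)

lemma rel_one {α : Type*} {rels : Set (FreeGroup α)} {r : FreeGroup α} (h : r ∈ rels) :
    PresentedGroup.mk rels r = 1 :=
  (QuotientGroup.eq_one_iff r).mpr (Subgroup.subset_normalClosure h)

abbrev Og := PresentedGroup (orbRels ∪ {A})
abbrev Pg := PresentedGroup polygonRels

def P (i : ZMod 6) : Pg := PresentedGroup.of i
def Q (i : Fin 6) : Og := PresentedGroup.of (some i)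

lemma pcube (i : ZMod 6) : P i ^ 3 = 1 := by
  have := rel_one (rels := polygonRels) (Or.inl ⟨i, rfl⟩)
  rw [_root_.map_pow] at this; exact this

lemma pcomm : ∀ i j : ZMod 6, i + 1 = j → P i * P j = P j * P i := by
  rintro i _ rfl
  have := rel_one (rels := polygonRels) (Or.inr ⟨i, rfl⟩)
  simp only [_root_.map_mul, _root_.map_inv] at this
  have h := mul_inv_eq_one.mp this
  exact h

-- conjugation-style consequences of commutation
lemma conj1 {G : Type*} [Group G] {a b : G} (h : a * b = b * a) :
    1 * a⁻¹ * b * a * b⁻¹ = 1 := by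
  have : 1 * a⁻¹ * b * a * b⁻¹ = a⁻¹ * (b * a) * b⁻¹ := by group
  rw [this, ← h]; group

lemma conj2 {G : Type*} [Group G] {a b : G} (h : a * b = b * a) :
    1 * a⁻¹ * b⁻¹ * a * b = 1 := by
  have : 1 * a⁻¹ * b⁻¹ * a * b = a⁻¹ * b⁻¹ * (a * b) := by group
  rw [this, h]; group

lemma conj3 {G : Type*} [Group G] {a b : G} (h : a * b = b * a) :
    1 * a * b * a⁻¹ * b⁻¹ = 1 := by
  have : 1 * a * b * a⁻¹ * b⁻¹ = (a * b) * a⁻¹ * b⁻¹ := by group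
  rw [this, h]; group

lemma comm_of_conj1 {G : Type*} [Group G] {a b : G} (h : 1 * a⁻¹ * b * a * b⁻¹ = 1) :
    b * a = a * b := by
  have : b * a = a * (1 * a⁻¹ * b * a * b⁻¹) * b := by group
  rw [this, h]; group

lemma comm_of_conj2 {G : Type*} [Group G] {a b : G} (h : 1 * a⁻¹ * b⁻¹ * a * b = 1) :
    a * b = b * a := by
  have : a * b = b * a * (1 * a⁻¹ * b⁻¹ * a * b) := by group
  rw [this, h]; group

lemma comm_of_conj3 {G : Type*} [Group G] {a b : G} (h : 1 * a * b * a⁻¹ * b⁻¹ = 1) :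
    a * b = b * a := by
  have : a * b = (1 * a * b * a⁻¹ * b⁻¹) * (b * a) := by group
  rw [this, h]; group

-- relations of the orbifold group, instantiated
lemma hA1 : (PresentedGroup.of none : Og) = 1 :=
  rel_one (rels := orbRels ∪ {A}) (Or.inr rfl)

lemma qcube (i : Fin 6) : Q i ^ 3 = 1 := by
  have := rel_one (rels := orbRels ∪ {A}) (Or.inl (Or.inl ⟨i, rfl⟩))
  rw [_root_.map_pow] at this; exact this

section
-- commutation relations in Og
lemma orbRel_mk {r : FreeGroup Gen}
    (h : r ∈ ({ (A * (g 0)⁻¹) ^ 3, (A * (g 1)⁻¹) ^ 3, (A * (g 3)⁻¹) ^ 3,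
    (A * (g 4)⁻¹) ^ 3, (A * (g 5)⁻¹) ^ 3, (A * g 2) ^ 3,
    A * (g 0)⁻¹ * g 1 * g 0 * (g 1)⁻¹,
    A * (g 5)⁻¹ * g 0 * g 5 * (g 0)⁻¹,
    A * (g 4)⁻¹ * g 5 * g 4 * (g 5)⁻¹,
    A * (g 3)⁻¹ * g 4 * g 3 * (g 4)⁻¹,
    A * (g 3)⁻¹ * (g 2)⁻¹ * g 3 * g 2,
    A * g 2 * g 1 * (g 2)⁻¹ * (g 1)⁻¹ } : Set (FreeGroup Gen))) :
    PresentedGroup.mk (orbRels ∪ {A}) r = 1 :=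
  rel_one (Or.inl (Or.inr h))

lemma qA : PresentedGroup.mk (orbRels ∪ {A}) A = 1 := hA1

lemma qg (i : Fin 6) : PresentedGroup.mk (orbRels ∪ {A}) (g i) = Q i := rfl

lemma qc01 : Q 0 * Q 1 = Q 1 * Q 0 := by
  have h := orbRel_mk (r := A * (g 0)⁻¹ * g 1 * g 0 * (g 1)⁻¹) (by simp)
  simp only [_root_.map_mul, _root_.map_inv, qA, qg] at h
  exact (comm_of_conj1 h).symm

lemma qc50 : Q 5 * Q 0 = Q 0 * Q 5 := by
  have h := orbRel_mk (r := A * (g 5)⁻¹ * g 0 * g 5 * (g 0)⁻¹) (by simp)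
  simp only [_root_.map_mul, _root_.map_inv, qA, qg] at h
  exact (comm_of_conj1 h).symm

lemma qc45 : Q 4 * Q 5 = Q 5 * Q 4 := by
  have h := orbRel_mk (r := A * (g 4)⁻¹ * g 5 * g 4 * (g 5)⁻¹) (by simp)
  simp only [_root_.map_mul, _root_.map_inv, qA, qg] at h
  exact (comm_of_conj1 h).symm

lemma qc34 : Q 3 * Q 4 = Q 4 * Q 3 := by
  have h := orbRel_mk (r := A * (g 3)⁻¹ * g 4 * g 3 * (g 4)⁻¹) (by simp)
  simp only [_root_.map_mul, _root_.map_inv, qA, qg] at h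
  exact (comm_of_conj1 h).symm

lemma qc23 : Q 2 * Q 3 = Q 3 * Q 2 := by
  have h := orbRel_mk (r := A * (g 3)⁻¹ * (g 2)⁻¹ * g 3 * g 2) (by simp)
  simp only [_root_.map_mul, _root_.map_inv, qA, qg] at h
  exact (comm_of_conj2 h).symm

lemma qc12 : Q 1 * Q 2 = Q 2 * Q 1 := by
  have h := orbRel_mk (r := A * g 2 * g 1 * (g 2)⁻¹ * (g 1)⁻¹) (by simp)
  simp only [_root_.map_mul, _root_.map_inv, qA, qg] at h
  exact (comm_of_conj3 h).symm

end

-- the forward generator map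
def fFwd : Gen → Pg := fun x => match x with
  | none => 1
  | some i => P ((i : ℕ) : ZMod 6)

def fBwd : ZMod 6 → Og := fun i => Q ⟨i.val, ZMod.val_lt i⟩

lemma fwd_rels : ∀ r ∈ orbRels ∪ {A}, FreeGroup.lift fFwd r = 1 := by
  have hcast : ∀ i : Fin 6, (((i : ℕ) : ZMod 6)) = (⟨i.val, i.isLt⟩ : Fin 6).val := by decide
  rintro r (hr | rfl)
  · rcases hr with ⟨i, rfl⟩ | hr
    · simp only [g, _root_.map_pow, FreeGroup.lift_apply_of]
      exact pcube _
    · have l : ∀ i : Fin 6, FreeGroup.lift fFwd (g i) = P ((i : ℕ) : ZMod 6) := fun i => by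
        simp [g, fFwd]
      have lA : FreeGroup.lift fFwd A = 1 := by simp [A, fFwd]
      have e0 : (((0 : Fin 6) : ℕ) : ZMod 6) = 0 := by decide
      have e1 : (((1 : Fin 6) : ℕ) : ZMod 6) = 1 := by decide
      have e2 : (((2 : Fin 6) : ℕ) : ZMod 6) = 2 := by decide
      have e3 : (((3 : Fin 6) : ℕ) : ZMod 6) = 3 := by decide
      have e4 : (((4 : Fin 6) : ℕ) : ZMod 6) = 4 := by decide
      have e5 : (((5 : Fin 6) : ℕ) : ZMod 6) = 5 := by decide
      simp only [Set.mem_insert_iff, Set.mem_singleton_iff] at hr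
      rcases hr with rfl|rfl|rfl|rfl|rfl|rfl|rfl|rfl|rfl|rfl|rfl|rfl <;>
        simp only [_root_.map_mul, _root_.map_inv, _root_.map_pow, l, lA, e0, e1, e2, e3, e4, e5]
      · rw [one_mul, inv_pow, pcube, inv_one]
      · rw [one_mul, inv_pow, pcube, inv_one]
      · rw [one_mul, inv_pow, pcube, inv_one]
      · rw [one_mul, inv_pow, pcube, inv_one]
      · rw [one_mul, inv_pow, pcube, inv_one]
      · rw [one_mul, pcube]
      · exact conj1 (pcomm 0 1 (by decide))
      · exact conj1 (pcomm 5 0 (by decide))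
      · exact conj1 (pcomm 4 5 (by decide))
      · exact conj1 (pcomm 3 4 (by decide))
      · exact conj2 (pcomm 2 3 (by decide)).symm
      · exact conj3 (pcomm 1 2 (by decide)).symm
  · simp [A, fFwd]

lemma bwd_rels : ∀ r ∈ polygonRels, FreeGroup.lift fBwd r = 1 := by
  rintro r (⟨i, rfl⟩ | ⟨i, rfl⟩)
  · simp only [_root_.map_pow, FreeGroup.lift_apply_of]
    exact qcube _
  · simp only [_root_.map_mul, _root_.map_inv, FreeGroup.lift_apply_of]
    rw [mul_inv_eq_one]
    have : ∀ i : ZMod 6, fBwd i * fBwd (i + 1) = fBwd (i + 1) * fBwd i := by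
      intro i
      fin_cases i
      · show Q 0 * Q 1 = Q 1 * Q 0; exact qc01
      · show Q 1 * Q 2 = Q 2 * Q 1; exact qc12
      · show Q 2 * Q 3 = Q 3 * Q 2; exact qc23
      · show Q 3 * Q 4 = Q 4 * Q 3; exact qc34
      · show Q 4 * Q 5 = Q 5 * Q 4; exact qc45
      · show Q 5 * Q 0 = Q 0 * Q 5; exact qc50
    exact this i

noncomputable def φ : Og →* Pg := PresentedGroup.toGroup fwd_rels
noncomputable def ψ : Pg →* Og := PresentedGroup.toGroup bwd_rels

theorem stmt12 :
    Nonempty (PresentedGroup (orbRels ∪ {A}) ≃* PresentedGroup polygonRels) := by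
  refine ⟨MonoidHom.toMulEquiv φ ψ ?_ ?_⟩
  · apply PresentedGroup.ext
    intro x
    match x with
    | none =>
      simp only [MonoidHom.comp_apply, MonoidHom.id_apply, φ, ψ, PresentedGroup.toGroup.of]
      simp only [fFwd, map_one]
      exact hA1.symm
    | some i =>
      simp only [MonoidHom.comp_apply, MonoidHom.id_apply, φ, PresentedGroup.toGroup.of]
      show ψ (P ((i:ℕ) : ZMod 6)) = _
      rw [show P ((i:ℕ) : ZMod 6) = PresentedGroup.of ((i:ℕ) : ZMod 6) from rfl]
      simp only [ψ, PresentedGroup.toGroup.of, fBwd, Q]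
      congr 2
      have : ∀ i : Fin 6, (((i:ℕ) : ZMod 6)).val = i.val := by decide
      exact Fin.ext (this i)
  · apply PresentedGroup.ext
    intro x
    simp only [MonoidHom.comp_apply, MonoidHom.id_apply, ψ, PresentedGroup.toGroup.of]
    show φ (Q ⟨x.val, ZMod.val_lt x⟩) = _
    rw [show Q ⟨x.val, ZMod.val_lt x⟩ = PresentedGroup.of (some ⟨x.val, ZMod.val_lt x⟩) from rfl]
    simp only [φ, PresentedGroup.toGroup.of, fFwd]
    have : ∀ x : ZMod 6, ((x.val : ℕ) : ZMod 6) = x := by decide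
    show P _ = _
    rw [show (((⟨x.val, ZMod.val_lt x⟩ : Fin 6) : ℕ) : ZMod 6) = x from this x]
    rfl
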